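/- (Lyapunov ratio bound for δ = 1.) In the model below with δ = 1, fix s > 2 and set Y_k = (a_k v_k/v_N) Σ_{j=0}^{v_N/v_k − 1} ε_{k,j} for 0 ≤ k ≤ N, Y_{N+1} = X_N = Σ_{k=N+1}^{∞} a_k ε_{k,0}, B_{N+1} = Σ_{k=0}^{N+1} Var(Y_k), and L_s(N) = (Σ_{k=0}^{N+1} E|Y_k|^s)/B_{N+1}^{s/2}. Then there exists a constant C > 0, independent of N, such that L_s(N) ≤ C · N^{1 − s/2} for all large N. -/

import Mathlib

/-!
Each `ε_{k,j}` is bounded and symmetric, hence sub-Gaussian by Hoeffding's lemma, and a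
sub-Gaussian variable with parameter `c` has `E|X|^s = O(c^{s/2})`, because
`|x|^s ≤ (s/e)^s (e^x + e^{-x})`. For `k ≤ N`, `Y_k` is `a_k v_k / v_N` times a sum of `v_N / v_k`
independent copies of `ε`, so both its variance and its sub-Gaussian parameter are proportional to
`(a_k √v_k)² / v_N ∈ [κ⁻² / v_N, κ² / v_N]`. Since `v_k` at least doubles at each step,
`|X_N| ≤ Σ_{k>N} a_k ≤ 3κ / √v_N`. Thus the numerator of `L_s(N)` is `O(N v_N^{-s/2})` while
`B_{N+1} ≳ N / v_N`, and `L_s(N) = O(N^{1-s/2})`.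
-/

open MeasureTheory ProbabilityTheory Filter
open scoped ENNReal NNReal

/-- `v_N = n_1 n_2 ⋯ n_N` (with `v_0 = 1`). -/
def vseq (n : ℕ → ℕ) (N : ℕ) : ℕ := ∏ i ∈ Finset.range N, n (i + 1)

/-- The tail sum `X_N = Σ_{k=N+1}^∞ a_k ε_{k,0}`. -/
noncomputable def Xtail {Ω : Type*} (a : ℕ → ℝ) (ε : ℕ → ℕ → Ω → ℝ) (N : ℕ) (ω : Ω) : ℝ :=
  ∑' k : ℕ, a (N + 1 + k) * ε (N + 1 + k) 0 ω

/-- `Y_k = (a_k v_k/v_N) Σ_{j=0}^{v_N/v_k − 1} ε_{k,j}` for `0 ≤ k ≤ N`. -/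
noncomputable def Ymain {Ω : Type*} (a : ℕ → ℝ) (n : ℕ → ℕ)
    (ε : ℕ → ℕ → Ω → ℝ) (N k : ℕ) (ω : Ω) : ℝ :=
  a k * (vseq n k : ℝ) / (vseq n N : ℝ) *
    ∑ j ∈ Finset.range (vseq n N / vseq n k), ε k j ω

open Real

lemma rpow_le_div_exp_one_rpow_mul_exp {y s : ℝ} (hy : 0 ≤ y) (hs : 0 < s) :
    y ^ s ≤ (s / exp 1) ^ s * exp y := by
  have h : y / s ≤ exp (y / s - 1) := by linarith [add_one_le_exp (y / s - 1)]
  calc y ^ s = s ^ s * (y / s) ^ s := by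
        rw [← mul_rpow hs.le (by positivity), mul_div_cancel₀ _ hs.ne']
    _ ≤ s ^ s * exp (y / s - 1) ^ s := by gcongr
    _ = (s / exp 1) ^ s * exp y := by
        rw [← exp_mul, div_rpow hs.le (exp_pos 1).le, exp_one_rpow, sub_mul,
          div_mul_cancel₀ _ hs.ne', one_mul, exp_sub]
        ring

lemma abs_rpow_le_mul_exp_add_exp_neg {s : ℝ} (hs : 0 < s) (x : ℝ) :
    |x| ^ s ≤ (s / exp 1) ^ s * (exp x + exp (-x)) := by
  refine (rpow_le_div_exp_one_rpow_mul_exp (abs_nonneg x) hs).trans ?_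
  gcongr
  rcases abs_cases x with ⟨h, _⟩ | ⟨h, _⟩ <;> rw [h] <;> linarith [exp_pos x, exp_pos (-x)]

section Probability

variable {Ω : Type*} [MeasurableSpace Ω] {μ : Measure Ω}

lemma ProbabilityTheory.HasSubgaussianMGF.integral_abs_rpow_le {X : Ω → ℝ} {c : ℝ≥0}
    (h : HasSubgaussianMGF X c μ) {s : ℝ} (hs : 0 < s) :
    ∫ ω, |X ω| ^ s ∂μ ≤ 2 * exp (1 / 2) * (s / exp 1) ^ s * (c : ℝ) ^ (s / 2) := by
  rcases eq_or_ne c 0 with rfl | hc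
  · have hX : (fun ω => |X ω| ^ s) =ᵐ[μ] 0 := by
      filter_upwards [h.ae_eq_zero_of_hasSubgaussianMGF_zero] with ω hω
      simp [hω, zero_rpow hs.ne']
    simp [integral_congr_ae hX, zero_rpow (half_pos hs).ne']
  set t : ℝ := (√(c : ℝ))⁻¹
  have hct : (c : ℝ) * t ^ 2 / 2 = 1 / 2 := by
    rw [inv_pow, sq_sqrt c.coe_nonneg]; field_simp
  have hscale : ∀ ω, |X ω| ^ s = (c : ℝ) ^ (s / 2) * |t * X ω| ^ s := by
    intro ω
    rw [abs_mul, mul_rpow (abs_nonneg _) (abs_nonneg _), ← mul_assoc, abs_inv,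
      abs_of_nonneg (sqrt_nonneg _), inv_rpow (sqrt_nonneg _), sqrt_eq_rpow,
      ← rpow_mul c.coe_nonneg, one_div_mul_eq_div, mul_inv_cancel₀ (by positivity), one_mul]
  have hmgf : mgf X μ t + mgf X μ (-t) ≤ 2 * exp (1 / 2) := by
    have hpos := h.mgf_le t
    have hneg := h.mgf_le (-t)
    rw [hct] at hpos
    rw [neg_sq, hct] at hneg
    linarith
  calc ∫ ω, |X ω| ^ s ∂μ
      ≤ ∫ ω, (c : ℝ) ^ (s / 2) * ((s / exp 1) ^ s * (exp (t * X ω) + exp ((-t) * X ω))) ∂μ := by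
        refine integral_mono_of_nonneg (ae_of_all _ fun ω => by positivity)
          (((h.integrable_exp_mul t).add (h.integrable_exp_mul (-t))).const_mul _ |>.const_mul _)
          (ae_of_all _ fun ω => ?_)
        dsimp only
        rw [hscale, neg_mul]
        gcongr
        exact abs_rpow_le_mul_exp_add_exp_neg hs _
    _ = (c : ℝ) ^ (s / 2) * ((s / exp 1) ^ s * (mgf X μ t + mgf X μ (-t))) := by
        rw [integral_const_mul, integral_const_mul,
          integral_add (h.integrable_exp_mul t) (h.integrable_exp_mul (-t))]
        rfl
    _ ≤ (c : ℝ) ^ (s / 2) * ((s / exp 1) ^ s * (2 * exp (1 / 2))) := by gcongr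
    _ = 2 * exp (1 / 2) * (s / exp 1) ^ s * (c : ℝ) ^ (s / 2) := by ring

lemma integral_eq_zero_of_map_neg_eq {X : Ω → ℝ} (hX : AEMeasurable X μ)
    (h : (μ.map X).map (fun x => -x) = μ.map X) : μ[X] = 0 := by
  have hmean : μ[X] = ∫ x, x ∂(μ.map X) := (integral_map hX aestronglyMeasurable_id).symm
  have hneg : ∫ x, x ∂((μ.map X).map (fun x => -x)) = -∫ x, x ∂(μ.map X) := by
    rw [integral_map measurable_neg.aemeasurable (by fun_prop), integral_neg]
  rw [h] at hneg
  linarith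

lemma variance_pos_of_map_absolutelyContinuous [IsProbabilityMeasure μ] {X : Ω → ℝ}
    (hX : MemLp X 2 μ) (hac : μ.map X ≪ volume) : 0 < variance X μ := by
  refine (variance_nonneg X μ).lt_of_ne fun h0 => ?_
  have hev : evariance X μ = 0 :=
    ((ENNReal.toReal_eq_zero_iff _).1 h0.symm).resolve_right hX.evariance_lt_top.ne
  have hdirac : μ.map X = Measure.dirac μ[X] := by
    rw [Measure.map_congr ((evariance_eq_zero_iff hX.aemeasurable).1 hev), Measure.map_const,
      measure_univ, one_smul]
  have := hac (Real.volume_singleton (a := μ[X]))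
  simp [hdirac] at this

lemma variance_const_mul_sum_range {X : ℕ → Ω → ℝ} (hX : ∀ j, MemLp (X j) 2 μ)
    (hind : Pairwise fun i j => IndepFun (X i) (X j) μ) {σ2 : ℝ}
    (hvar : ∀ j, variance (X j) μ = σ2) (c : ℝ) (m : ℕ) :
    variance (fun ω => c * ∑ j ∈ Finset.range m, X j ω) μ = c ^ 2 * m * σ2 := by
  rw [variance_const_mul, ← Finset.sum_fn,
    IndepFun.variance_sum (fun j _ => hX j) (fun i _ j _ hij => hind hij)]
  simp [hvar, mul_assoc]

end Probability

lemma lyapunov_ratio_le {s u d A₁ A₂ : ℝ} (hs : 2 ≤ s) (hu : 0 < u) (hd : 0 < d)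
    (hA₁ : 0 ≤ A₁) (hA₂ : 0 ≤ A₂) {N : ℕ} (hN : 0 < N) {M V : ℕ → ℝ} {M' V' : ℝ}
    (hM : ∀ k ≤ N, M k ≤ A₁ * u ^ (s / 2)) (hM' : M' ≤ A₂ * u ^ (s / 2))
    (hV : ∀ k ≤ N, d * u ≤ V k) (hV' : 0 ≤ V') :
    ((∑ k ∈ Finset.range (N + 1), M k) + M') / ((∑ k ∈ Finset.range (N + 1), V k) + V') ^ (s / 2)
      ≤ (A₁ + A₂) / d ^ (s / 2) * (N : ℝ) ^ (1 - s / 2) := by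
  have hmem : ∀ k ∈ Finset.range (N + 1), k ≤ N := fun k hk =>
    Nat.lt_succ_iff.1 (Finset.mem_range.1 hk)
  have hN1 : (1 : ℝ) ≤ N + 1 := le_add_of_nonneg_left N.cast_nonneg
  have hnum : (∑ k ∈ Finset.range (N + 1), M k) + M' ≤ (N + 1) * (A₁ + A₂) * u ^ (s / 2) := by
    have := Finset.sum_le_sum fun k hk => hM k (hmem k hk)
    rw [Finset.sum_const, Finset.card_range, nsmul_eq_mul, Nat.cast_add_one] at this
    have : A₂ * u ^ (s / 2) ≤ (N + 1) * (A₂ * u ^ (s / 2)) :=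
      le_mul_of_one_le_left (by positivity) hN1
    linarith
  have hden : (N + 1) * d * u ≤ (∑ k ∈ Finset.range (N + 1), V k) + V' := by
    have := Finset.sum_le_sum fun k hk => hV k (hmem k hk)
    rw [Finset.sum_const, Finset.card_range, nsmul_eq_mul, Nat.cast_add_one] at this
    linarith
  calc ((∑ k ∈ Finset.range (N + 1), M k) + M') / ((∑ k ∈ Finset.range (N + 1), V k) + V') ^ (s / 2)
      ≤ ((N + 1) * (A₁ + A₂) * u ^ (s / 2)) / ((N + 1) * d * u) ^ (s / 2) :=
        div_le_div₀ (by positivity) hnum (by positivity)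
          (rpow_le_rpow (by positivity) hden (by positivity))
    _ = (A₁ + A₂) / d ^ (s / 2) * ((N : ℝ) + 1) ^ (1 - s / 2) := by
        rw [mul_rpow (by positivity) hu.le, mul_rpow (by positivity) hd.le,
          rpow_sub (by positivity), rpow_one]
        field_simp
    _ ≤ (A₁ + A₂) / d ^ (s / 2) * (N : ℝ) ^ (1 - s / 2) :=
        mul_le_mul_of_nonneg_left
          (rpow_le_rpow_of_nonpos (Nat.cast_pos.2 hN) (by linarith) (by linarith)) (by positivity)

section Model

variable {n : ℕ → ℕ}

lemma vseq_pos (hn : ∀ k, 1 ≤ k → 2 ≤ n k) (N : ℕ) : 0 < vseq n N :=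
  Finset.prod_pos fun i _ => by have := hn (i + 1) (by omega); omega

lemma vseq_dvd {k N : ℕ} (h : k ≤ N) : vseq n k ∣ vseq n N := by
  obtain ⟨j, rfl⟩ := Nat.exists_eq_add_of_le h
  exact ⟨_, Finset.prod_range_add _ k j⟩

lemma vseq_mul_two_pow_le (hn : ∀ k, 1 ≤ k → 2 ≤ n k) (N j : ℕ) :
    vseq n N * 2 ^ j ≤ vseq n (N + j) := by
  rw [vseq, vseq, Finset.prod_range_add]
  gcongr
  calc 2 ^ j = ∏ _i ∈ Finset.range j, 2 := by simp
    _ ≤ ∏ i ∈ Finset.range j, n (N + i + 1) := Finset.prod_le_prod' fun i _ => hn _ (by omega)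

lemma Ymain_coeff_sq_mul_card (hn : ∀ k, 1 ≤ k → 2 ≤ n k) {k N : ℕ} (hk : k ≤ N) (x : ℝ) :
    (x * vseq n k / vseq n N) ^ 2 * ((vseq n N / vseq n k : ℕ) : ℝ)
      = (x * √(vseq n k : ℝ)) ^ 2 / vseq n N := by
  have hk0 : (0 : ℝ) < vseq n k := by exact_mod_cast vseq_pos hn k
  have hN0 : (0 : ℝ) < vseq n N := by exact_mod_cast vseq_pos hn N
  rw [Nat.cast_div (vseq_dvd hk) hk0.ne', mul_pow, sq_sqrt hk0.le]
  field_simp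

variable {a : ℕ → ℝ} {κ : ℝ}

lemma tsum_tail_le (hn : ∀ k, 1 ≤ k → 2 ≤ n k) (ha : Summable a) (hκ : 0 ≤ κ)
    (hup : ∀ k, a k * √(vseq n k : ℝ) ≤ κ) (N : ℕ) :
    ∑' k, a (N + 1 + k) ≤ 3 * κ / √(vseq n N : ℝ) := by
  have hv : 0 < √(vseq n N : ℝ) := sqrt_pos.2 (by exact_mod_cast vseq_pos hn N)
  -- `3` bounds `∑_{k ≥ 1} 2^{-k/2} = 1 / (√2 - 1)`.
  have h2 : (4 / 3 : ℝ) ≤ √2 := by nlinarith [sq_sqrt (zero_le_two : (0 : ℝ) ≤ 2), sqrt_nonneg 2]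
  set r : ℝ := (√2)⁻¹
  have hr0 : 0 ≤ r := by positivity
  have hr : r ≤ 3 / 4 := by
    rw [inv_le_comm₀ (by positivity) (by norm_num)]; linarith
  have hterm : ∀ k, a (N + 1 + k) ≤ κ / √(vseq n N : ℝ) * r * r ^ k := by
    intro k
    have hvk : (vseq n N : ℝ) * 2 ^ (k + 1) ≤ vseq n (N + 1 + k) := by
      rw [show N + 1 + k = N + (k + 1) by ring]
      exact_mod_cast vseq_mul_two_pow_le hn N (k + 1)
    have hsq : √(vseq n N : ℝ) * √2 ^ (k + 1) ≤ √(vseq n (N + 1 + k) : ℝ) := by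
      have hpow : √((2 : ℝ) ^ (k + 1)) = √2 ^ (k + 1) := by
        rw [← sqrt_sq (pow_nonneg (sqrt_nonneg 2) _), ← pow_mul, mul_comm, pow_mul,
          sq_sqrt zero_le_two]
      rw [← hpow, ← sqrt_mul (Nat.cast_nonneg _)]
      exact sqrt_le_sqrt hvk
    calc a (N + 1 + k) ≤ κ / √(vseq n (N + 1 + k) : ℝ) :=
          (le_div_iff₀ (sqrt_pos.2 (by exact_mod_cast vseq_pos hn _))).2 (hup _)
      _ ≤ κ / (√(vseq n N : ℝ) * √2 ^ (k + 1)) :=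
          div_le_div_of_nonneg_left hκ (by positivity) hsq
      _ = κ / √(vseq n N : ℝ) * r * r ^ k := by
          simp only [r, inv_pow, pow_succ]; field_simp
  have hgeom : Summable fun k : ℕ => κ / √(vseq n N : ℝ) * r * r ^ k :=
    (summable_geometric_of_lt_one hr0 (by linarith)).mul_left _
  calc ∑' k, a (N + 1 + k) ≤ ∑' k, κ / √(vseq n N : ℝ) * r * r ^ k :=
        (ha.comp_injective (add_right_injective (N + 1))).tsum_le_tsum hterm hgeom
    _ = κ / √(vseq n N : ℝ) * (r * (1 - r)⁻¹) := by
        rw [tsum_mul_left, tsum_geometric_of_lt_one hr0 (by linarith), mul_assoc]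
    _ ≤ κ / √(vseq n N : ℝ) * 3 := by
        gcongr
        rw [← div_eq_mul_inv, div_le_iff₀ (by linarith)]
        linarith
    _ = 3 * κ / √(vseq n N : ℝ) := by ring

lemma abs_Xtail_le {Ω : Type*} {ε : ℕ → ℕ → Ω → ℝ} (hn : ∀ k, 1 ≤ k → 2 ≤ n k)
    (ha0 : ∀ k, 0 ≤ a k) (ha : Summable a) (hκ : 0 ≤ κ)
    (hup : ∀ k, a k * √(vseq n k : ℝ) ≤ κ) (hε : ∀ k j ω, |ε k j ω| ≤ 1) (N : ℕ) (ω : Ω) : |Xtail a ε N ω| ≤ 3 * κ / √(vseq n N : ℝ) := by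
  refine (tsum_of_norm_bounded (f := fun k => a (N + 1 + k) * ε (N + 1 + k) 0 ω)
    (ha.comp_injective (add_right_injective (N + 1))).hasSum fun k => ?_).trans
    (tsum_tail_le hn ha hκ hup N)
  rw [norm_mul, Real.norm_of_nonneg (ha0 _), Real.norm_eq_abs]
  exact mul_le_of_le_one_right (ha0 _) (hε _ _ ω)

end Model

section Moments

variable {Ω : Type*} [MeasurableSpace Ω] {μ : Measure Ω} {n : ℕ → ℕ} {a : ℕ → ℝ} {κ : ℝ}
  {ε : ℕ → ℕ → Ω → ℝ}

lemma integral_abs_Xtail_rpow_le [IsProbabilityMeasure μ] (hn : ∀ k, 1 ≤ k → 2 ≤ n k)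
    (ha0 : ∀ k, 0 ≤ a k) (ha : Summable a) (hκ : 0 ≤ κ)
    (hup : ∀ k, a k * √(vseq n k : ℝ) ≤ κ) (hε : ∀ k j ω, |ε k j ω| ≤ 1) (N : ℕ) {s : ℝ}
    (hs : 0 ≤ s) :
    ∫ ω, |Xtail a ε N ω| ^ s ∂μ ≤ (3 * κ) ^ s * ((vseq n N : ℝ)⁻¹) ^ (s / 2) := by
  have hbound : ∀ ω, ‖|Xtail a ε N ω| ^ s‖ ≤ (3 * κ / √(vseq n N : ℝ)) ^ s := fun ω => by
    rw [norm_of_nonneg (by positivity)]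
    exact rpow_le_rpow (abs_nonneg _) (abs_Xtail_le hn ha0 ha hκ hup hε N ω) hs
  calc ∫ ω, |Xtail a ε N ω| ^ s ∂μ ≤ (3 * κ / √(vseq n N : ℝ)) ^ s := by
        simpa using (le_abs_self _).trans (norm_integral_le_of_norm_le_const (μ := μ)
          (ae_of_all _ hbound))
    _ = (3 * κ) ^ s * ((vseq n N : ℝ)⁻¹) ^ (s / 2) := by
        rw [div_eq_mul_inv, mul_rpow (by positivity) (by positivity), sqrt_eq_rpow,
          ← rpow_neg_one, ← rpow_neg_one, ← rpow_mul (Nat.cast_nonneg _),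
          ← rpow_mul (Nat.cast_nonneg _), ← rpow_mul (Nat.cast_nonneg _)]
        ring_nf

lemma le_variance_Ymain (hn : ∀ k, 1 ≤ k → 2 ≤ n k) (hκ : 0 ≤ κ)
    (hlow : ∀ k, κ⁻¹ ≤ a k * √(vseq n k : ℝ)) (hL2 : ∀ k j, MemLp (ε k j) 2 μ)
    (hind : ∀ k, iIndepFun (ε k) μ) {σ2 : ℝ} (hσ : 0 ≤ σ2)
    (hvar : ∀ k j, variance (ε k j) μ = σ2) {k N : ℕ} (hk : k ≤ N) :
    κ⁻¹ ^ 2 * σ2 * (vseq n N : ℝ)⁻¹ ≤ variance (Ymain a n ε N k) μ := by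
  unfold Ymain
  rw [variance_const_mul_sum_range (hL2 k) (fun i j hij => (hind k).indepFun hij) (hvar k),
    Ymain_coeff_sq_mul_card hn hk, div_eq_mul_inv, mul_right_comm]
  gcongr ?_ * _ * _
  exact pow_le_pow_left₀ (inv_nonneg.2 hκ) (hlow k) 2

lemma integral_abs_Ymain_rpow_le (hn : ∀ k, 1 ≤ k → 2 ≤ n k) (ha0 : ∀ k, 0 ≤ a k)
    (hup : ∀ k, a k * √(vseq n k : ℝ) ≤ κ) {c : ℝ≥0}
    (hsubG : ∀ k j, HasSubgaussianMGF (ε k j) c μ) (hind : ∀ k, iIndepFun (ε k) μ)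
    {k N : ℕ} (hk : k ≤ N) {s : ℝ} (hs : 0 < s) :
    ∫ ω, |Ymain a n ε N k ω| ^ s ∂μ
      ≤ 2 * exp (1 / 2) * (s / exp 1) ^ s * (κ ^ 2 * c) ^ (s / 2) *
          ((vseq n N : ℝ)⁻¹) ^ (s / 2) := by
  have h := ((HasSubgaussianMGF.sum_of_iIndepFun (hind k)
    (s := Finset.range (vseq n N / vseq n k)) fun j _ => hsubG k j).const_mul
      (a k * vseq n k / vseq n N)).integral_abs_rpow_le hs
  have hcoeff : (a k * √(vseq n k : ℝ)) ^ 2 / vseq n N * c ≤ κ ^ 2 * c * (vseq n N : ℝ)⁻¹ := by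
    rw [div_eq_mul_inv, mul_right_comm]
    gcongr ?_ * _ * _
    exact pow_le_pow_left₀ (mul_nonneg (ha0 k) (sqrt_nonneg _)) (hup k) 2
  refine h.trans ?_
  change _ * ((a k * vseq n k / vseq n N) ^ 2 *
    ((∑ _j ∈ Finset.range (vseq n N / vseq n k), c : ℝ≥0) : ℝ)) ^ (s / 2) ≤ _
  rw [NNReal.coe_sum, Finset.sum_const, Finset.card_range, nsmul_eq_mul, ← mul_assoc,
    Ymain_coeff_sq_mul_card hn hk, mul_assoc _ ((κ ^ 2 * c : ℝ) ^ (s / 2)),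
    ← mul_rpow (mul_nonneg (sq_nonneg κ) c.coe_nonneg) (inv_nonneg.2 (Nat.cast_nonneg _))]
  gcongr

end Moments

theorem lyapunov_ratio_delta_one_general
    {Ω : Type*} [MeasureSpace Ω] [IsProbabilityMeasure (ℙ : Measure Ω)]
    (δ κ : ℝ) (hδ : δ = 1) (hκ : 1 ≤ κ)
    (n : ℕ → ℕ) (hn : ∀ k, 1 ≤ k → 2 ≤ n k)
    (a : ℕ → ℝ) (ha_pos : ∀ k, 0 < a k) (ha_sum : ∑' k, a k = 1)
    (ha_low : ∀ k, κ⁻¹ ≤ a k * (vseq n k : ℝ) ^ (δ / 2))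
    (ha_up : ∀ k, a k * (vseq n k : ℝ) ^ (δ / 2) ≤ κ)
    (ε : ℕ → ℕ → Ω → ℝ) (με : Measure ℝ) (ϵ : ℝ) (hϵ1 : ϵ < 1)
    (hmeas : ∀ k j, Measurable (ε k j))
    (hindep : iIndepFun (fun kj : ℕ × ℕ => ε kj.1 kj.2) ℙ)
    (hlaw : ∀ k j, Measure.map (ε k j) ℙ = με)
    (hsymm : Measure.map (fun x => -x) με = με)
    (hval : ∀ k j ω, ε k j ω ∈ Set.Icc (-ϵ) ϵ)
    (hdens : ∃ (f : ℝ → ℝ≥0∞) (M : ℝ≥0∞), M ≠ ⊤ ∧ (∀ x, f x ≤ M) ∧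
      με = MeasureTheory.volume.withDensity f)
    (s : ℝ) (hs : 2 < s) :
    ∃ C : ℝ, 0 < C ∧ ∃ N₀ : ℕ, ∀ N : ℕ, N₀ ≤ N →
      ((∑ k ∈ Finset.range (N + 1), ∫ ω, |Ymain a n ε N k ω| ^ s ∂(ℙ : Measure Ω)) +
          ∫ ω, |Xtail a ε N ω| ^ s ∂(ℙ : Measure Ω)) /
        ((∑ k ∈ Finset.range (N + 1), variance (Ymain a n ε N k) (ℙ : Measure Ω)) +
            variance (Xtail a ε N) (ℙ : Measure Ω)) ^ (s / 2) ≤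
        C * (N : ℝ) ^ (1 - s / 2) := by
  subst hδ
  obtain ⟨f, -, -, -, hμε⟩ := hdens
  have hκ0 : 0 < κ := zero_lt_one.trans_le hκ
  have ha : Summable a := by
    by_contra h
    simp [tsum_eq_zero_of_not_summable h] at ha_sum
  have hup : ∀ k, a k * √(vseq n k : ℝ) ≤ κ := fun k => by rw [sqrt_eq_rpow]; exact ha_up k
  have hlow : ∀ k, κ⁻¹ ≤ a k * √(vseq n k : ℝ) := fun k => by rw [sqrt_eq_rpow]; exact ha_low k
  have hsubG : ∀ k j, HasSubgaussianMGF (ε k j) ((‖ϵ - -ϵ‖₊ / 2) ^ 2) ℙ := fun k j =>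
    hasSubgaussianMGF_of_mem_Icc_of_integral_eq_zero (hmeas k j).aemeasurable
      (ae_of_all _ (hval k j))
      (integral_eq_zero_of_map_neg_eq (hmeas k j).aemeasurable (by rw [hlaw, hsymm]))
  have hL2 : ∀ k j, MemLp (ε k j) 2 ℙ := fun k j => (hsubG k j).memLp 2
  have hrow : ∀ k, iIndepFun (ε k) ℙ := fun k =>
    hindep.precomp (g := Prod.mk k) (Prod.mk_right_injective k)
  have hvar : ∀ k j, variance (ε k j) ℙ = variance (ε 0 0) ℙ := fun k j =>
    (IdentDistrib.mk (hmeas k j).aemeasurable (hmeas 0 0).aemeasurable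
      (by rw [hlaw, hlaw])).variance_eq
  have hσ : 0 < variance (ε 0 0) ℙ := variance_pos_of_map_absolutelyContinuous (hL2 0 0)
    (by rw [hlaw, hμε]; exact withDensity_absolutelyContinuous _ _)
  have hε1 : ∀ k j ω, |ε k j ω| ≤ 1 := fun k j ω => (abs_le.2 (hval k j ω)).trans hϵ1.le
  have ha0 : ∀ k, 0 ≤ a k := fun k => (ha_pos k).le
  refine ⟨_, ?_, 1, fun N hN => lyapunov_ratio_le hs.le
    (inv_pos.2 (by exact_mod_cast vseq_pos hn N)) (by positivity) (by positivity) (by positivity) hN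
    (fun k hk => integral_abs_Ymain_rpow_le hn ha0 hup hsubG hrow hk (by linarith))
    (integral_abs_Xtail_rpow_le hn ha0 ha hκ0.le hup hε1 N (by linarith))
    (fun k hk => le_variance_Ymain hn hκ0.le hlow hL2 hrow hσ.le hvar hk) (variance_nonneg _ _)⟩
  positivity

/-- Lyapunov ratio bound for `δ = 1`: with `Y_{N+1} = X_N` and
`B_{N+1} = Σ_{k=0}^{N+1} Var(Y_k)`, one has
`L_s(N) = (Σ_{k=0}^{N+1} E|Y_k|^s)/B_{N+1}^{s/2} ≤ C·N^{1−s/2}` for all large `N`. -/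
theorem lyapunov_ratio_delta_one
    {Ω : Type*} [MeasureSpace Ω] [IsProbabilityMeasure (ℙ : Measure Ω)]
    (δ κ : ℝ) (hδ : δ = 1) (hκ : 1 ≤ κ)
    (n : ℕ → ℕ) (hn : ∀ k, 1 ≤ k → 2 ≤ n k)
    (a : ℕ → ℝ) (ha_pos : ∀ k, 0 < a k) (ha_sum : ∑' k, a k = 1)
    (ha_low : ∀ k, κ⁻¹ ≤ a k * (vseq n k : ℝ) ^ (δ / 2))
    (ha_up : ∀ k, a k * (vseq n k : ℝ) ^ (δ / 2) ≤ κ)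
    (ε : ℕ → ℕ → Ω → ℝ) (με : Measure ℝ) (ϵ : ℝ) (hϵ0 : 0 ≤ ϵ) (hϵ1 : ϵ < 1)
    (hmeas : ∀ k j, Measurable (ε k j))
    (hindep : iIndepFun (fun kj : ℕ × ℕ => ε kj.1 kj.2) ℙ)
    (hlaw : ∀ k j, Measure.map (ε k j) ℙ = με)
    (hsymm : Measure.map (fun x => -x) με = με)
    (hval : ∀ k j ω, ε k j ω ∈ Set.Icc (-ϵ) ϵ)
    (hdens : ∃ (f : ℝ → ℝ≥0∞) (M : ℝ≥0∞), M ≠ ⊤ ∧ (∀ x, f x ≤ M) ∧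
      με = MeasureTheory.volume.withDensity f)
    (s : ℝ) (hs : 2 < s) :
    ∃ C : ℝ, 0 < C ∧ ∃ N₀ : ℕ, ∀ N : ℕ, N₀ ≤ N →
      ((∑ k ∈ Finset.range (N + 1), ∫ ω, |Ymain a n ε N k ω| ^ s ∂(ℙ : Measure Ω)) +
          ∫ ω, |Xtail a ε N ω| ^ s ∂(ℙ : Measure Ω)) /
        ((∑ k ∈ Finset.range (N + 1), variance (Ymain a n ε N k) (ℙ : Measure Ω)) +
            variance (Xtail a ε N) (ℙ : Measure Ω)) ^ (s / 2) ≤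
        C * (N : ℝ) ^ (1 - s / 2) :=
  lyapunov_ratio_delta_one_general δ κ hδ hκ n hn a ha_pos ha_sum ha_low ha_up ε με ϵ hϵ1 hmeas
    hindep hlaw hsymm hval hdens s hs
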